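/- Let X be a real normed vector space, K ⊂ X a non-zero wedge, and 𝒜 a nonempty set of homogeneous, bounded maps on K. With β_m = inf_{f∈𝒜^m} ‖f‖ and γ_m = inf_{f∈𝒜^m} r(f), the common subradius r_*(𝒜) satisfies r_*(𝒜) = lim_{m→∞} β_m^{1/m} = liminf_{m→∞} γ_m^{1/m}. -/

import Mathlib

open Filter Topology Set

noncomputable section

/-- A wedge in a real normed space: a convex set closed under positive scalar multiplication. -/
def IsWedge {X : Type*} [NormedAddCommGroup X] [NormedSpace ℝ X] (W : Set X) : Prop :=
  Convex ℝ W ∧ ∀ c : ℝ, 0 < c → ∀ x ∈ W, c • x ∈ W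

/-- A closed cone: closed, convex, closed under positive scalar multiplication, K ∩ (−K) = {0}. -/
def IsClosedCone {X : Type*} [NormedAddCommGroup X] [NormedSpace ℝ X] (K : Set X) : Prop :=
  IsClosed K ∧ Convex ℝ K ∧ (∀ c : ℝ, 0 < c → ∀ x ∈ K, c • x ∈ K) ∧ K ∩ (-K) = {0}

/-- A polyhedral cone: intersection of finitely many closed halfspaces through the origin. -/
def IsPolyhedralCone {X : Type*} [NormedAddCommGroup X] [NormedSpace ℝ X] (K : Set X) : Prop :=
  ∃ (k : ℕ) (φ : Fin k → (X →ₗ[ℝ] ℝ)), K = {x | ∀ i, 0 ≤ φ i x}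

/-- `f` maps `W` into itself and is positively homogeneous on `W`. -/
def HomogOn {X : Type*} [NormedAddCommGroup X] [NormedSpace ℝ X] (f : X → X) (W : Set X) : Prop :=
  Set.MapsTo f W W ∧ ∀ c : ℝ, 0 < c → ∀ x ∈ W, f (c • x) = c • f x

/-- `f` is order-preserving with respect to the order induced by the cone `K`. -/
def OrderPresOn {X : Type*} [NormedAddCommGroup X] [NormedSpace ℝ X] (f : X → X) (K : Set X) : Prop :=
  ∀ x ∈ K, ∀ y ∈ K, y - x ∈ K → f y - f x ∈ K

/-- `f` is subadditive on `K`: f(x+y) ≤ f(x)+f(y) in the cone order. -/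
def SubaddOn {X : Type*} [NormedAddCommGroup X] [NormedSpace ℝ X] (f : X → X) (K : Set X) : Prop :=
  ∀ x ∈ K, ∀ y ∈ K, (f x + f y) - f (x + y) ∈ K

/-- The norm of a homogeneous map on `W`: sup of ‖f x‖ over unit vectors of `W`. -/
def opNormW {X : Type*} [NormedAddCommGroup X] (f : X → X) (W : Set X) : ℝ :=
  sSup ((fun x => ‖f x‖) '' {x ∈ W | ‖x‖ = 1})

/-- A bounded homogeneous map on `W`. -/
def BoundedMapOn {X : Type*} [NormedAddCommGroup X] (f : X → X) (W : Set X) : Prop :=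
  ∃ C : ℝ, ∀ x ∈ W, ‖f x‖ ≤ C * ‖x‖

/-- A bounded family of homogeneous maps on `W`. -/
def BoundedFamOn {X : Type*} [NormedAddCommGroup X] (A : Set (X → X)) (W : Set X) : Prop :=
  ∃ C : ℝ, ∀ f ∈ A, ∀ x ∈ W, ‖f x‖ ≤ C * ‖x‖

/-- `famPow A m` = 𝒜^m, the set of m-fold compositions of maps from `A` (with 𝒜^0 = {id}). -/
def famPow {X : Type*} (A : Set (X → X)) : ℕ → Set (X → X)
  | 0 => {id}
  | m + 1 => {h | ∃ f ∈ A, ∃ g ∈ famPow A m, h = f ∘ g}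

/-- The composition of two families of maps. -/
def compFam {X : Type*} (A B : Set (X → X)) : Set (X → X) :=
  {h | ∃ f ∈ A, ∃ g ∈ B, h = f ∘ g}

/-- The Bonsall cone spectral radius r(f) = inf_{n>0} ‖f^n‖^{1/n}. -/
def coneSpecRad {X : Type*} [NormedAddCommGroup X] (f : X → X) (W : Set X) : ℝ :=
  ⨅ n : ℕ+, (opNormW (f^[(n : ℕ)]) W) ^ (((n : ℕ) : ℝ)⁻¹)

/-- sup_{f ∈ 𝒜^m} ‖f‖^{1/m}. -/
def jointTerm {X : Type*} [NormedAddCommGroup X] (A : Set (X → X)) (W : Set X) (m : ℕ) : ℝ :=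
  sSup ((fun f => (opNormW f W) ^ ((m : ℝ)⁻¹)) '' famPow A m)

/-- sup_{f ∈ 𝒜^m} r(f)^{1/m}. -/
def genTerm {X : Type*} [NormedAddCommGroup X] (A : Set (X → X)) (W : Set X) (m : ℕ) : ℝ :=
  sSup ((fun f => (coneSpecRad f W) ^ ((m : ℝ)⁻¹)) '' famPow A m)

/-- The joint spectral radius r̂(𝒜) = inf_{m>0} sup_{f ∈ 𝒜^m} ‖f‖^{1/m}. -/
def jointRad {X : Type*} [NormedAddCommGroup X] (A : Set (X → X)) (W : Set X) : ℝ :=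
  ⨅ m : ℕ+, jointTerm A W (m : ℕ)

/-- The generalized spectral radius r(𝒜) = sup_{m>0} sup_{f ∈ 𝒜^m} r(f)^{1/m}. -/
def genRad {X : Type*} [NormedAddCommGroup X] (A : Set (X → X)) (W : Set X) : ℝ :=
  ⨆ m : ℕ+, genTerm A W (m : ℕ)

/-- β_m = inf_{f ∈ 𝒜^m} ‖f‖. -/
def subBeta {X : Type*} [NormedAddCommGroup X] (A : Set (X → X)) (W : Set X) (m : ℕ) : ℝ :=
  sInf ((fun f => opNormW f W) '' famPow A m)

/-- γ_m = inf_{f ∈ 𝒜^m} r(f). -/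
def subGamma {X : Type*} [NormedAddCommGroup X] (A : Set (X → X)) (W : Set X) (m : ℕ) : ℝ :=
  sInf ((fun f => coneSpecRad f W) '' famPow A m)

/-- F_m^d = f_m ∘ ⋯ ∘ f_1 for a sequence d of maps. -/
def seqComp {X : Type*} (d : ℕ → X → X) : ℕ → X → X
  | 0 => id
  | m + 1 => d m ∘ seqComp d m

/-- The standard cone ℝⁿ_{≥0}. -/
def stdCone (n : ℕ) : Set (Fin n → ℝ) := {x | ∀ i, 0 ≤ x i}

/-- The closed face F_J of the standard cone. -/
def stdFace {n : ℕ} (J : Set (Fin n)) : Set (Fin n → ℝ) :=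
  {x | (∀ i, 0 ≤ x i) ∧ ∀ i ∉ J, x i = 0}

/-- A family of maps on ℝⁿ_{≥0} is irreducible if no non-trivial closed face is invariant
under every member of the family. -/
def IrreducibleFam {n : ℕ} (A : Set ((Fin n → ℝ) → Fin n → ℝ)) : Prop :=
  ¬ ∃ J : Set (Fin n), J.Nonempty ∧ J ≠ Set.univ ∧ ∀ f ∈ A, Set.MapsTo f (stdFace J) (stdFace J)


/-!
Composition is submultiplicative for the cone norm, so `β (m + n) ≤ β m * β n` and Fekete's lemma,
applied to `log β`, gives `β m ^ (1 / m) → L := inf_m β m ^ (1 / m)`. If `f ∈ 𝒜^m` then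
`f^[n] ∈ 𝒜^(n m)`, so `‖f^[n]‖ ≥ β (n m) ≥ L ^ (n m)` and therefore `r f ≥ L ^ m`. Since also
`r f ≤ ‖f‖`, the sequence `γ m ^ (1 / m)` is squeezed between `L` and `β m ^ (1 / m)`, so it even
converges to `L`.
-/

open Real

section Submultiplicative

variable {u : ℕ → ℝ}

lemma eq_zero_of_submultiplicative (hu0 : ∀ n, 0 ≤ u n) (hu : ∀ m n, u (m + n) ≤ u m * u n)
    {k n : ℕ} (hk : u k = 0) (hn : k ≤ n) : u n = 0 := by
  obtain ⟨j, rfl⟩ := Nat.exists_eq_add_of_le hn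
  exact le_antisymm (by simpa [hk] using hu k j) (hu0 _)

lemma subadditive_log_of_submultiplicative (hpos : ∀ n, 0 < u n)
    (hu : ∀ m n, u (m + n) ≤ u m * u n) : Subadditive fun n => log (u n) := fun m n => by
  rw [← log_mul (hpos m).ne' (hpos n).ne']
  exact log_le_log (hpos _) (hu m n)

lemma eventually_rpow_inv_lt_of_submultiplicative (hu0 : ∀ n, 0 ≤ u n)
    (hu : ∀ m n, u (m + n) ≤ u m * u n) {N : ℕ} (hN : 0 < N) {b : ℝ}
    (hb : u N ^ (N : ℝ)⁻¹ < b) : ∀ᶠ n in atTop, u n ^ (n : ℝ)⁻¹ < b := by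
  have hb0 : 0 < b := (rpow_nonneg (hu0 N) _).trans_lt hb
  by_cases hzero : ∃ k, u k = 0
  · obtain ⟨k, hk⟩ := hzero
    filter_upwards [eventually_ge_atTop (max k 1)] with n hn
    have hn1 : (n : ℝ)⁻¹ ≠ 0 := inv_ne_zero (Nat.cast_ne_zero.2 (by omega))
    rwa [eq_zero_of_submultiplicative hu0 hu hk (le_of_max_le_left hn), zero_rpow hn1]
  · push Not at hzero
    have hpos : ∀ n, 0 < u n := fun n => (hu0 n).lt_of_ne' (hzero n)
    have hlog : log (u N) / N < log b := by
      rwa [rpow_def_of_pos (hpos N), ← div_eq_mul_inv, ← lt_log_iff_exp_lt hb0] at hb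
    filter_upwards [(subadditive_log_of_submultiplicative hpos hu).eventually_div_lt_of_div_lt
      hN.ne' hlog] with n hn
    rwa [rpow_def_of_pos (hpos n), ← div_eq_mul_inv, ← lt_log_iff_exp_lt hb0]

lemma iInf_rpow_inv_nonneg (hu0 : ∀ n, 0 ≤ u n) : 0 ≤ ⨅ n : ℕ+, u n ^ ((n : ℕ) : ℝ)⁻¹ :=
  le_ciInf fun n => rpow_nonneg (hu0 n) _

lemma iInf_rpow_inv_le (hu0 : ∀ n, 0 ≤ u n) (k : ℕ+) :
    ⨅ n : ℕ+, u n ^ ((n : ℕ) : ℝ)⁻¹ ≤ u k ^ ((k : ℕ) : ℝ)⁻¹ :=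
  ciInf_le ⟨0, by rintro _ ⟨n, rfl⟩; exact rpow_nonneg (hu0 n) _⟩ k

lemma iInf_rpow_inv_pow_le (hu0 : ∀ n, 0 ≤ u n) (k : ℕ+) :
    (⨅ n : ℕ+, u n ^ ((n : ℕ) : ℝ)⁻¹) ^ (k : ℕ) ≤ u k := by
  have h := iInf_rpow_inv_le hu0 k
  rwa [le_rpow_inv_iff_of_pos (iInf_rpow_inv_nonneg hu0) (hu0 k) (by positivity),
    rpow_natCast] at h

theorem tendsto_rpow_inv_iInf_of_submultiplicative (hu0 : ∀ n, 0 ≤ u n)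
    (hu : ∀ m n, u (m + n) ≤ u m * u n) :
    Tendsto (fun n : ℕ+ => u n ^ ((n : ℕ) : ℝ)⁻¹) atTop
      (𝓝 (⨅ n : ℕ+, u n ^ ((n : ℕ) : ℝ)⁻¹)) := by
  refine tendsto_order.2 ⟨fun a ha => .of_forall fun n => ha.trans_le (iInf_rpow_inv_le hu0 n),
    fun b hb => ?_⟩
  obtain ⟨N, hN⟩ := exists_lt_of_ciInf_lt hb
  exact tendsto_PNat_val_atTop_atTop.eventually
    (eventually_rpow_inv_lt_of_submultiplicative hu0 hu N.pos hN)

end Submultiplicative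

section FamPow

variable {α : Type*} {A : Set (α → α)}

lemma famPow_nonempty (hA : A.Nonempty) (m : ℕ) : (famPow A m).Nonempty := by
  induction m with
  | zero => exact ⟨id, rfl⟩
  | succ m ih =>
    obtain ⟨f, hf⟩ := hA
    obtain ⟨g, hg⟩ := ih
    exact ⟨f ∘ g, f, hf, g, hg, rfl⟩

lemma comp_mem_famPow {f g : α → α} {m n : ℕ} (hf : f ∈ famPow A m) (hg : g ∈ famPow A n) :
    f ∘ g ∈ famPow A (m + n) := by
  induction m generalizing f with
  | zero =>
    obtain rfl : f = id := hf
    simpa using hg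
  | succ m ih =>
    obtain ⟨a, ha, f', hf', rfl⟩ := hf
    rw [Nat.add_right_comm]
    exact ⟨a, ha, f' ∘ g, ih hf', rfl⟩

lemma iterate_mem_famPow {f : α → α} {m : ℕ} (hf : f ∈ famPow A m) (n : ℕ) :
    f^[n] ∈ famPow A (n * m) := by
  induction n with
  | zero => rw [Nat.zero_mul]; rfl
  | succ n ih =>
    rw [Function.iterate_succ', Nat.succ_mul, Nat.add_comm]
    exact comp_mem_famPow hf ih

end FamPow

section ConeNorm

variable {X : Type*} [NormedAddCommGroup X] {W : Set X} {A : Set (X → X)} {f g : X → X}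

lemma opNormW_nonneg (f : X → X) (W : Set X) : 0 ≤ opNormW f W :=
  sSup_nonneg (by rintro _ ⟨x, _, rfl⟩; exact norm_nonneg _)

lemma BoundedMapOn.bddAbove_image_unitSphere (hf : BoundedMapOn f W) :
    BddAbove ((fun x => ‖f x‖) '' {x ∈ W | ‖x‖ = 1}) := by
  obtain ⟨C, hC⟩ := hf
  refine ⟨C, ?_⟩
  rintro _ ⟨x, ⟨hxW, hx1⟩, rfl⟩
  simpa [hx1] using hC x hxW

lemma coneSpecRad_nonneg (f : X → X) (W : Set X) : 0 ≤ coneSpecRad f W :=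
  le_ciInf fun _ => rpow_nonneg (opNormW_nonneg _ W) _

lemma coneSpecRad_le_opNormW (f : X → X) (W : Set X) : coneSpecRad f W ≤ opNormW f W := by
  have h := ciInf_le (f := fun n : ℕ+ => opNormW (f^[(n : ℕ)]) W ^ ((n : ℕ) : ℝ)⁻¹)
    ⟨0, by rintro _ ⟨n, rfl⟩; exact rpow_nonneg (opNormW_nonneg _ W) _⟩ 1
  simpa [coneSpecRad] using h

lemma subBeta_nonneg (A : Set (X → X)) (W : Set X) (m : ℕ) : 0 ≤ subBeta A W m :=
  sInf_nonneg (by rintro _ ⟨f, _, rfl⟩; exact opNormW_nonneg f W)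

lemma subBeta_le_opNormW {f : X → X} {m : ℕ} (hf : f ∈ famPow A m) :
    subBeta A W m ≤ opNormW f W :=
  csInf_le ⟨0, by rintro _ ⟨g, _, rfl⟩; exact opNormW_nonneg g W⟩ ⟨f, hf, rfl⟩

lemma subBeta_eq_iInf (A : Set (X → X)) (W : Set X) (m : ℕ) :
    subBeta A W m = ⨅ f : famPow A m, opNormW f W := by
  rw [subBeta, sInf_image']

lemma subGamma_nonneg (A : Set (X → X)) (W : Set X) (m : ℕ) : 0 ≤ subGamma A W m :=
  sInf_nonneg (by rintro _ ⟨f, _, rfl⟩; exact coneSpecRad_nonneg f W)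

lemma subGamma_le_subBeta (hAne : A.Nonempty) (m : ℕ) : subGamma A W m ≤ subBeta A W m := by
  refine le_csInf ((famPow_nonempty hAne m).image _) ?_
  rintro _ ⟨f, hf, rfl⟩
  calc subGamma A W m ≤ coneSpecRad f W :=
        csInf_le ⟨0, by rintro _ ⟨g, _, rfl⟩; exact coneSpecRad_nonneg g W⟩ ⟨f, hf, rfl⟩
    _ ≤ opNormW f W := coneSpecRad_le_opNormW f W

lemma pow_iInf_le_coneSpecRad {m : ℕ+} {f : X → X} (hf : f ∈ famPow A m) :
    (⨅ k : ℕ+, subBeta A W k ^ ((k : ℕ) : ℝ)⁻¹) ^ (m : ℕ) ≤ coneSpecRad f W := by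
  set L := ⨅ k : ℕ+, subBeta A W k ^ ((k : ℕ) : ℝ)⁻¹
  have hL : 0 ≤ L := iInf_rpow_inv_nonneg (subBeta_nonneg A W)
  refine le_ciInf fun n => ?_
  rw [le_rpow_inv_iff_of_pos (pow_nonneg hL _) (opNormW_nonneg _ W) (by positivity),
    rpow_natCast, ← pow_mul, mul_comm]
  calc L ^ ((n * m : ℕ+) : ℕ) ≤ subBeta A W ((n * m : ℕ+) : ℕ) :=
        iInf_rpow_inv_pow_le (subBeta_nonneg A W) (n * m)
    _ ≤ opNormW (f^[n]) W := subBeta_le_opNormW (iterate_mem_famPow hf n)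

lemma iInf_le_subGamma_rpow_inv (hAne : A.Nonempty) (m : ℕ+) :
    ⨅ k : ℕ+, subBeta A W k ^ ((k : ℕ) : ℝ)⁻¹ ≤ subGamma A W m ^ ((m : ℕ) : ℝ)⁻¹ := by
  rw [le_rpow_inv_iff_of_pos (iInf_rpow_inv_nonneg (subBeta_nonneg A W))
    (subGamma_nonneg A W m) (by positivity), rpow_natCast]
  refine le_csInf ((famPow_nonempty hAne m).image _) ?_
  rintro _ ⟨f, hf, rfl⟩
  exact pow_iInf_le_coneSpecRad hf

variable [NormedSpace ℝ X]

lemma HomogOn.map_zero (hf : HomogOn f W) (h0 : (0 : X) ∈ W) : f 0 = 0 := by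
  have h := hf.2 2 two_pos 0 h0
  rw [smul_zero, two_smul] at h
  exact left_eq_add.mp h

lemma HomogOn.comp (hf : HomogOn f W) (hg : HomogOn g W) : HomogOn (f ∘ g) W :=
  ⟨hf.1.comp hg.1, fun c hc x hx => by
    simp only [Function.comp_apply, hg.2 c hc x hx, hf.2 c hc _ (hg.1 hx)]⟩

lemma norm_apply_le_opNormW_mul (hW : IsWedge W) (hf : HomogOn f W) (hb : BoundedMapOn f W)
    {x : X} (hx : x ∈ W) : ‖f x‖ ≤ opNormW f W * ‖x‖ := by
  rcases eq_or_ne x 0 with rfl | hx0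
  · simp [hf.map_zero hx]
  have hnx : 0 < ‖x‖ := norm_pos_iff.2 hx0
  have hyW : ‖x‖⁻¹ • x ∈ W := hW.2 _ (inv_pos.2 hnx) x hx
  have hy1 : ‖‖x‖⁻¹ • x‖ = 1 := by
    rw [norm_smul, norm_inv, norm_norm, inv_mul_cancel₀ hnx.ne']
  have hfx : f x = ‖x‖ • f (‖x‖⁻¹ • x) := by
    rw [← hf.2 _ hnx _ hyW, smul_inv_smul₀ hnx.ne']
  calc ‖f x‖ = ‖f (‖x‖⁻¹ • x)‖ * ‖x‖ := by rw [hfx, norm_smul, norm_norm, mul_comm]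
    _ ≤ opNormW f W * ‖x‖ := by
      gcongr
      exact le_csSup hb.bddAbove_image_unitSphere ⟨_, ⟨hyW, hy1⟩, rfl⟩

lemma norm_comp_apply_le (hW : IsWedge W) (hf : HomogOn f W) (hbf : BoundedMapOn f W)
    (hg : HomogOn g W) (hbg : BoundedMapOn g W) {x : X} (hx : x ∈ W) :
    ‖f (g x)‖ ≤ opNormW f W * opNormW g W * ‖x‖ :=
  calc ‖f (g x)‖ ≤ opNormW f W * ‖g x‖ := norm_apply_le_opNormW_mul hW hf hbf (hg.1 hx)
    _ ≤ opNormW f W * (opNormW g W * ‖x‖) := by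
      gcongr
      · exact opNormW_nonneg f W
      · exact norm_apply_le_opNormW_mul hW hg hbg hx
    _ = opNormW f W * opNormW g W * ‖x‖ := (mul_assoc _ _ _).symm

lemma BoundedMapOn.comp (hW : IsWedge W) (hf : HomogOn f W) (hbf : BoundedMapOn f W)
    (hg : HomogOn g W) (hbg : BoundedMapOn g W) : BoundedMapOn (f ∘ g) W :=
  ⟨_, fun _ hx => norm_comp_apply_le hW hf hbf hg hbg hx⟩

lemma opNormW_comp_le (hW : IsWedge W) (hf : HomogOn f W) (hbf : BoundedMapOn f W)
    (hg : HomogOn g W) (hbg : BoundedMapOn g W) :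
    opNormW (f ∘ g) W ≤ opNormW f W * opNormW g W := by
  refine Real.sSup_le ?_ (mul_nonneg (opNormW_nonneg f W) (opNormW_nonneg g W))
  rintro _ ⟨x, ⟨hxW, hx1⟩, rfl⟩
  simpa [hx1] using norm_comp_apply_le hW hf hbf hg hbg hxW

lemma homogOn_and_boundedMapOn_of_mem_famPow (hW : IsWedge W)
    (hA : ∀ f ∈ A, HomogOn f W ∧ BoundedMapOn f W) {m : ℕ} :
    ∀ f ∈ famPow A m, HomogOn f W ∧ BoundedMapOn f W := by
  induction m with
  | zero =>
    rintro f (rfl : f = id)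
    exact ⟨⟨mapsTo_id W, fun _ _ _ _ => rfl⟩, ⟨1, fun x _ => by simp⟩⟩
  | succ m ih =>
    rintro _ ⟨f, hf, g, hg, rfl⟩
    obtain ⟨hf1, hf2⟩ := hA f hf
    obtain ⟨hg1, hg2⟩ := ih g hg
    exact ⟨hf1.comp hg1, hf2.comp hW hf1 hg1 hg2⟩

lemma subBeta_add_le_mul (hW : IsWedge W) (hAne : A.Nonempty)
    (hA : ∀ f ∈ A, HomogOn f W ∧ BoundedMapOn f W) (m n : ℕ) :
    subBeta A W (m + n) ≤ subBeta A W m * subBeta A W n := by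
  have := (famPow_nonempty hAne m).to_subtype
  have := (famPow_nonempty hAne n).to_subtype
  rw [subBeta_eq_iInf A W m, iInf_mul_of_nonneg (subBeta_nonneg A W n)]
  refine le_ciInf fun f => ?_
  rw [subBeta_eq_iInf A W n, mul_iInf_of_nonneg (opNormW_nonneg _ W)]
  refine le_ciInf fun g => ?_
  obtain ⟨hf1, hf2⟩ := homogOn_and_boundedMapOn_of_mem_famPow hW hA f f.2
  obtain ⟨hg1, hg2⟩ := homogOn_and_boundedMapOn_of_mem_famPow hW hA g g.2
  exact (subBeta_le_opNormW (comp_mem_famPow f.2 g.2)).trans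
    (opNormW_comp_le hW hf1 hf2 hg1 hg2)

end ConeNorm

theorem statement17_general {X : Type*} [NormedAddCommGroup X] [NormedSpace ℝ X]
    (W : Set X) (hW : IsWedge W)
    (A : Set (X → X)) (hAne : A.Nonempty)
    (hA : ∀ f ∈ A, HomogOn f W ∧ BoundedMapOn f W) :
    Tendsto (fun m : ℕ+ => (subBeta A W (m : ℕ)) ^ (((m : ℕ) : ℝ)⁻¹)) atTop
      (𝓝 (⨅ m : ℕ+, (subBeta A W (m : ℕ)) ^ (((m : ℕ) : ℝ)⁻¹))) ∧
    Filter.liminf (fun m : ℕ+ => (subGamma A W (m : ℕ)) ^ (((m : ℕ) : ℝ)⁻¹)) atTop =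
      ⨅ m : ℕ+, (subBeta A W (m : ℕ)) ^ (((m : ℕ) : ℝ)⁻¹) := by
  have hβ := tendsto_rpow_inv_iInf_of_submultiplicative (subBeta_nonneg A W)
    (subBeta_add_le_mul hW hAne hA)
  have hγ : Tendsto (fun m : ℕ+ => subGamma A W m ^ ((m : ℕ) : ℝ)⁻¹) atTop
      (𝓝 (⨅ m : ℕ+, subBeta A W m ^ ((m : ℕ) : ℝ)⁻¹)) :=
    tendsto_of_tendsto_of_tendsto_of_le_of_le tendsto_const_nhds hβ
      (iInf_le_subGamma_rpow_inv hAne) fun m =>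
        rpow_le_rpow (subGamma_nonneg A W m) (subGamma_le_subBeta hAne m) (by positivity)
  exact ⟨hβ, hγ.liminf_eq⟩

theorem statement17 {X : Type*} [NormedAddCommGroup X] [NormedSpace ℝ X]
    (W : Set X) (hW : IsWedge W) (hW0 : ∃ x ∈ W, x ≠ 0)
    (A : Set (X → X)) (hAne : A.Nonempty)
    (hA : ∀ f ∈ A, HomogOn f W ∧ BoundedMapOn f W) :
    Tendsto (fun m : ℕ+ => (subBeta A W (m : ℕ)) ^ (((m : ℕ) : ℝ)⁻¹)) atTop
      (𝓝 (⨅ m : ℕ+, (subBeta A W (m : ℕ)) ^ (((m : ℕ) : ℝ)⁻¹))) ∧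
    Filter.liminf (fun m : ℕ+ => (subGamma A W (m : ℕ)) ^ (((m : ℕ) : ℝ)⁻¹)) atTop =
      ⨅ m : ℕ+, (subBeta A W (m : ℕ)) ^ (((m : ℕ) : ℝ)⁻¹) :=
  statement17_general W hW A hAne hA
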